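/- Let D and f be bounded self-adjoint operators with [D, f] bounded in norm by K, and suppose D² ≥ c·1 with c > 0. Then ‖[f, D(1+D²)^{-1/2}]‖ ≤ K(1+c)^{-1/2} + 2K(1+c)^{-1/2}, i.e., the commutator of f with the bounded transform of D is bounded in norm by 3K/√(1+c). -/

import Mathlib

/-
Write `B = D R` with `R = (1 + D²)^{-1/2}`, so that `[f, B] = [f, D] R + D [f, R]`. On the
spectrum of `D` we have `x² ≥ c`, hence `‖R‖ ≤ (1 + c)^{-1/2}` and the first term is at most
`K/√(1+c)`. For the second, the resolvent integral `π R = ∫₀^∞ μ^{-1/2} R_μ dμ` with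
`R_μ = (1 + D² + μ)⁻¹` reduces everything to the resolvents, for which, with `C = [D, f]`,
`D [f, R_μ] = D R_μ (D C + C D) R_μ = (D R_μ D)(C R_μ) + (D R_μ) C (D R_μ)`.
Spectral bounds give `‖D R_μ D‖ ≤ 1`, `‖D R_μ‖ ≤ (1+c+μ)^{-1/2}` and `‖R_μ‖ ≤ (1+c+μ)⁻¹`, so
`‖D [f, R_μ]‖ ≤ 2K/(1+c+μ)`, and integrating against `μ^{-1/2}` yields `2Kπ/√(1+c)`.
-/

open scoped InnerProductSpace

/-- The bounded transform `T ↦ T(1 + T²)^{-1/2}`, via the continuous functional calculus. -/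
noncomputable def boundedTransform {H : Type*} [NormedAddCommGroup H] [InnerProductSpace ℂ H]
    [CompleteSpace H] (T : H →L[ℂ] H) : H →L[ℂ] H :=
  cfc (fun x : ℝ => x * (Real.sqrt (1 + x ^ 2))⁻¹) T

open MeasureTheory Set Real

lemma integral_Ioi_inv_sqrt_mul_inv_add {b : ℝ} (hb : 0 < b) :
    ∫ μ in Ioi (0 : ℝ), (√μ)⁻¹ * (b + μ)⁻¹ = π / √b := by
  have hsb : 0 < √b := sqrt_pos.mpr hb
  -- substitute `μ = x²`, then `x = √b y`
  have hsub : EqOn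
      (fun x : ℝ => (2 * x ^ ((2 : ℝ) - 1)) • ((√(x ^ (2 : ℝ)))⁻¹ * (b + x ^ (2 : ℝ))⁻¹))
      (fun x => 2 * b⁻¹ * (1 + ((√b)⁻¹ * x) ^ 2)⁻¹) (Ioi 0) := by
    intro x (hx : 0 < x)
    simp only [rpow_two, sqrt_sq hx.le, smul_eq_mul]
    norm_num
    field_simp
    rw [sq_sqrt hb.le]
    ring
  rw [← integral_comp_rpow_Ioi_of_pos two_pos, setIntegral_congr_fun measurableSet_Ioi hsub,
    integral_const_mul,
    integral_comp_mul_left_Ioi (fun y => (1 + y ^ 2)⁻¹) 0 (inv_pos.mpr hsb),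
    mul_zero, integral_Ioi_inv_one_add_sq, arctan_zero, sub_zero, inv_inv, smul_eq_mul]
  field_simp
  rw [sq_sqrt hb.le]

lemma integrableOn_Ioi_inv_sqrt_mul_inv_add {b : ℝ} (hb : 0 < b) :
    IntegrableOn (fun μ : ℝ => (√μ)⁻¹ * (b + μ)⁻¹) (Ioi 0) :=
  Integrable.of_integral_ne_zero <| by
    rw [integral_Ioi_inv_sqrt_mul_inv_add hb]; positivity

lemma continuous_inv_one_add_sq_add {μ : ℝ} (hμ : 0 ≤ μ) :
    Continuous fun x : ℝ => (1 + x ^ 2 + μ)⁻¹ :=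
  (by fun_prop : Continuous fun x : ℝ => 1 + x ^ 2 + μ).inv₀ fun x => by positivity

lemma continuous_inv_sqrt_one_add_sq : Continuous fun x : ℝ => (√(1 + x ^ 2))⁻¹ :=
  (by fun_prop : Continuous fun x : ℝ => √(1 + x ^ 2)).inv₀ fun x => by positivity

lemma continuousOn_inv_sqrt_mul_inv_one_add_sq_add :
    ContinuousOn (Function.uncurry fun (μ x : ℝ) => (√μ)⁻¹ * (1 + x ^ 2 + μ)⁻¹)
      (Ioi 0 ×ˢ univ) := by
  refine ContinuousOn.mul ?_ ?_
  · exact (continuous_sqrt.comp continuous_fst).continuousOn.inv₀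
      fun p hp => (sqrt_pos.mpr hp.1).ne'
  · exact (by fun_prop : Continuous fun p : ℝ × ℝ => 1 + p.2 ^ 2 + p.1).continuousOn.inv₀
      fun p hp => by have : 0 < p.1 := hp.1; positivity

lemma norm_inv_sqrt_mul_inv_one_add_sq_add_le {μ : ℝ} (hμ : 0 ≤ μ) (x : ℝ) :
    ‖(√μ)⁻¹ * (1 + x ^ 2 + μ)⁻¹‖ ≤ (√μ)⁻¹ * (1 + μ)⁻¹ := by
  rw [norm_of_nonneg (by positivity)]
  gcongr
  nlinarith [sq_nonneg x]

lemma Units.mul_inv_sub_inv_mul_eq {R : Type*} [Ring R] (u : Rˣ) (f : R) :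
    f * ↑u⁻¹ - ↑u⁻¹ * f = ↑u⁻¹ * (↑u * f - f * ↑u) * ↑u⁻¹ := by
  simp only [mul_sub, sub_mul, mul_assoc, Units.mul_inv, mul_one]
  simp only [← mul_assoc, Units.inv_mul, one_mul]

section CStarAlgebra

variable {A : Type*} [CStarAlgebra A] {a : A} {c μ : ℝ}

lemma IsSelfAdjoint.le_sq_of_mem_spectrum [PartialOrder A] [StarOrderedRing A]
    (ha : IsSelfAdjoint a) (hsq : algebraMap ℝ A c ≤ a ^ 2) : ∀ x ∈ spectrum ℝ a, c ≤ x ^ 2 := by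
  rwa [← cfc_pow_id (R := ℝ) a 2 ha, algebraMap_le_cfc_iff _ _ _ (by fun_prop) ha] at hsq

noncomputable def sqResolvent (a : A) (μ : ℝ) : A := cfc (fun x : ℝ => (1 + x ^ 2 + μ)⁻¹) a

noncomputable def invSqrtOneAddSq (a : A) : A := cfc (fun x : ℝ => (√(1 + x ^ 2))⁻¹) a

lemma mul_sqResolvent_eq (ha : IsSelfAdjoint a) (hμ : 0 ≤ μ) :
    a * sqResolvent a μ = cfc (fun x : ℝ => x * (1 + x ^ 2 + μ)⁻¹) a := by
  rw [cfc_mul (fun x : ℝ => x) _ a (by fun_prop)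
    (continuous_inv_one_add_sq_add hμ).continuousOn, cfc_id' ℝ a, sqResolvent]

lemma mul_sqResolvent_mul_eq (ha : IsSelfAdjoint a) (hμ : 0 ≤ μ) :
    a * sqResolvent a μ * a = cfc (fun x : ℝ => x * (1 + x ^ 2 + μ)⁻¹ * x) a := by
  rw [cfc_mul (fun x : ℝ => x * (1 + x ^ 2 + μ)⁻¹) (fun x : ℝ => x) a
    (continuous_id.mul (continuous_inv_one_add_sq_add hμ)).continuousOn (by fun_prop),
    cfc_id' ℝ a, mul_sqResolvent_eq ha hμ]

lemma norm_sqResolvent_le (hc : 0 ≤ c) (hμ : 0 ≤ μ)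
    (hspec : ∀ x ∈ spectrum ℝ a, c ≤ x ^ 2) :
    ‖sqResolvent a μ‖ ≤ (1 + c + μ)⁻¹ := by
  refine norm_cfc_le (by positivity) fun x hx => ?_
  rw [norm_of_nonneg (by positivity)]
  gcongr
  exact hspec x hx

lemma norm_mul_sqResolvent_le (ha : IsSelfAdjoint a) (hc : 0 ≤ c) (hμ : 0 ≤ μ)
    (hspec : ∀ x ∈ spectrum ℝ a, c ≤ x ^ 2) :
    ‖a * sqResolvent a μ‖ ≤ (√(1 + c + μ))⁻¹ := by
  rw [mul_sqResolvent_eq ha hμ]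
  refine norm_cfc_le (by positivity) fun x hx => ?_
  have hxc := hspec x hx
  have hs : √(1 + c + μ) ^ 2 = 1 + c + μ := sq_sqrt (by positivity)
  rw [norm_mul, norm_inv, norm_of_nonneg (by positivity : 0 ≤ 1 + x ^ 2 + μ),
    ← div_eq_mul_inv, div_le_iff₀ (by positivity), ← div_eq_inv_mul, le_div_iff₀ (by positivity)]
  -- AM-GM: `2 |x| √(1+c+μ) ≤ x² + (1 + c + μ) ≤ 2 (1 + x² + μ)`
  nlinarith [sq_nonneg (‖x‖ - √(1 + c + μ)), sq_abs x, norm_nonneg x, Real.norm_eq_abs x]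

lemma norm_mul_sqResolvent_mul_le (ha : IsSelfAdjoint a) (hμ : 0 ≤ μ) :
    ‖a * sqResolvent a μ * a‖ ≤ 1 := by
  rw [mul_sqResolvent_mul_eq ha hμ]
  refine norm_cfc_le zero_le_one fun x _ => ?_
  rw [mul_right_comm, ← sq, norm_of_nonneg (by positivity), ← div_eq_mul_inv,
    div_le_one (by positivity)]
  linarith

lemma mul_commutator_sqResolvent_eq (ha : IsSelfAdjoint a) (hμ : 0 ≤ μ) (f : A) :
    a * (f * sqResolvent a μ - sqResolvent a μ * f) =
      a * sqResolvent a μ * a * ((a * f - f * a) * sqResolvent a μ) +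
        a * sqResolvent a μ * (a * f - f * a) * (a * sqResolvent a μ) := by
  let u := cfcUnits (fun x : ℝ => 1 + x ^ 2 + μ) a (fun x _ => by positivity)
  have hu : (u : A) = algebraMap ℝ A (1 + μ) + a ^ 2 := by
    change cfc (fun x : ℝ => 1 + x ^ 2 + μ) a = _
    rw [show (fun x : ℝ => 1 + x ^ 2 + μ) = fun x => (1 + μ) + x ^ 2 by ext; ring,
      cfc_const_add _ _ a, cfc_pow_id a 2]
  have hcomm : (u : A) * f - f * u = a * (a * f - f * a) + (a * f - f * a) * a := by
    rw [hu, add_mul, mul_add, Algebra.commutes]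
    noncomm_ring
  change a * (f * ↑u⁻¹ - ↑u⁻¹ * f) = _
  rw [Units.mul_inv_sub_inv_mul_eq, hcomm]
  change a * (sqResolvent a μ * _ * sqResolvent a μ) = _
  noncomm_ring

lemma norm_mul_commutator_sqResolvent_le (ha : IsSelfAdjoint a) (hc : 0 ≤ c) (hμ : 0 ≤ μ)
    (hspec : ∀ x ∈ spectrum ℝ a, c ≤ x ^ 2) {f : A} {K : ℝ} (hK : ‖a * f - f * a‖ ≤ K) :
    ‖a * (f * sqResolvent a μ - sqResolvent a μ * f)‖ ≤ 2 * K * (1 + c + μ)⁻¹ := by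
  have hK0 : 0 ≤ K := (norm_nonneg _).trans hK
  have hR := norm_sqResolvent_le hc hμ hspec
  have haR := norm_mul_sqResolvent_le ha hc hμ hspec
  have haRa := norm_mul_sqResolvent_mul_le ha hμ
  have hs : (√(1 + c + μ))⁻¹ * (√(1 + c + μ))⁻¹ = (1 + c + μ)⁻¹ := by
    rw [← mul_inv, mul_self_sqrt (by positivity)]
  rw [mul_commutator_sqResolvent_eq ha hμ]
  calc _ ≤ ‖a * sqResolvent a μ * a‖ * (‖a * f - f * a‖ * ‖sqResolvent a μ‖) +
        ‖a * sqResolvent a μ‖ * ‖a * f - f * a‖ * ‖a * sqResolvent a μ‖ := by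
        refine (norm_add_le _ _).trans (add_le_add ?_ ?_)
        · exact (norm_mul_le _ _).trans (by gcongr; exact norm_mul_le _ _)
        · exact (norm_mul_le _ _).trans (by gcongr; exact norm_mul_le _ _)
    _ ≤ 1 * (K * (1 + c + μ)⁻¹) + (√(1 + c + μ))⁻¹ * K * (√(1 + c + μ))⁻¹ := by
        gcongr
    _ = 2 * K * (1 + c + μ)⁻¹ := by rw [← hs]; ring

lemma cfc_inv_sqrt_mul_inv_one_add_sq_add (hμ : 0 ≤ μ) :
    cfc (fun x : ℝ => (√μ)⁻¹ * (1 + x ^ 2 + μ)⁻¹) a = (√μ)⁻¹ • sqResolvent a μ :=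
  cfc_const_mul _ _ a (continuous_inv_one_add_sq_add hμ).continuousOn

lemma integrableOn_inv_sqrt_smul_sqResolvent (ha : IsSelfAdjoint a) :
    IntegrableOn (fun μ => (√μ)⁻¹ • sqResolvent a μ) (Ioi 0) := by
  refine (integrableOn_cfc measurableSet_Ioi _ (fun μ => (√μ)⁻¹ * (1 + μ)⁻¹) a
    (continuousOn_inv_sqrt_mul_inv_one_add_sq_add.mono (prod_mono subset_rfl (subset_univ _)))
    (ae_restrict_of_forall_mem measurableSet_Ioi fun μ hμ x _ =>
      norm_inv_sqrt_mul_inv_one_add_sq_add_le (mem_Ioi.mp hμ).le x)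
    (integrableOn_Ioi_inv_sqrt_mul_inv_add one_pos).hasFiniteIntegral).congr_fun
    (fun μ (hμ : 0 < μ) => cfc_inv_sqrt_mul_inv_one_add_sq_add hμ.le) measurableSet_Ioi

lemma integral_inv_sqrt_smul_sqResolvent (ha : IsSelfAdjoint a) :
    ∫ μ in Ioi (0 : ℝ), (√μ)⁻¹ • sqResolvent a μ = π • invSqrtOneAddSq a := by
  rw [← setIntegral_congr_fun measurableSet_Ioi
      fun μ (hμ : 0 < μ) => cfc_inv_sqrt_mul_inv_one_add_sq_add (a := a) hμ.le,
    ← cfc_setIntegral measurableSet_Ioi _ (fun μ => (√μ)⁻¹ * (1 + μ)⁻¹) a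
      (continuousOn_inv_sqrt_mul_inv_one_add_sq_add.mono
        (prod_mono subset_rfl (subset_univ _)))
      (ae_restrict_of_forall_mem measurableSet_Ioi fun μ hμ x _ =>
        norm_inv_sqrt_mul_inv_one_add_sq_add_le (mem_Ioi.mp hμ).le x)
      (integrableOn_Ioi_inv_sqrt_mul_inv_add one_pos).hasFiniteIntegral,
    invSqrtOneAddSq, ← cfc_const_mul _ _ a continuous_inv_sqrt_one_add_sq.continuousOn]
  refine cfc_congr fun x _ => ?_
  rw [integral_Ioi_inv_sqrt_mul_inv_add (by positivity), div_eq_mul_inv]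

lemma norm_invSqrtOneAddSq_le (hc : 0 ≤ c) (hspec : ∀ x ∈ spectrum ℝ a, c ≤ x ^ 2) :
    ‖invSqrtOneAddSq a‖ ≤ (√(1 + c))⁻¹ := by
  refine norm_cfc_le (by positivity) fun x hx => ?_
  rw [norm_of_nonneg (by positivity)]
  gcongr
  exact hspec x hx

lemma norm_mul_commutator_invSqrtOneAddSq_le (ha : IsSelfAdjoint a) (hc : 0 ≤ c)
    (hspec : ∀ x ∈ spectrum ℝ a, c ≤ x ^ 2) {f : A} {K : ℝ} (hK : ‖a * f - f * a‖ ≤ K) :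
    ‖a * (f * invSqrtOneAddSq a - invSqrtOneAddSq a * f)‖ ≤ 2 * K / √(1 + c) := by
  let Ψ : A →L[ℝ] A := (ContinuousLinearMap.mul ℝ A a).comp
    (ContinuousLinearMap.mul ℝ A f - (ContinuousLinearMap.mul ℝ A).flip f)
  have hΨ (X : A) : Ψ X = a * (f * X - X * f) := by simp [Ψ, mul_sub]
  have hrep : π • (a * (f * invSqrtOneAddSq a - invSqrtOneAddSq a * f)) =
      ∫ μ in Ioi (0 : ℝ), (√μ)⁻¹ • (a * (f * sqResolvent a μ - sqResolvent a μ * f)) := by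
    simp_rw [← hΨ, ← map_smul, ← integral_inv_sqrt_smul_sqResolvent ha,
      ← Ψ.integral_comp_comm (integrableOn_inv_sqrt_smul_sqResolvent ha)]
  have hnorm : π * ‖a * (f * invSqrtOneAddSq a - invSqrtOneAddSq a * f)‖ ≤
      π * (2 * K / √(1 + c)) := by
    rw [← norm_of_nonneg pi_pos.le, ← norm_smul, hrep, norm_of_nonneg pi_pos.le]
    calc _ ≤ ∫ μ in Ioi (0 : ℝ), 2 * K * ((√μ)⁻¹ * (1 + c + μ)⁻¹) := by
          refine norm_integral_le_of_norm_le
            ((integrableOn_Ioi_inv_sqrt_mul_inv_add (by positivity)).const_mul _) ?_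
          refine ae_restrict_of_forall_mem measurableSet_Ioi fun μ (hμ : 0 < μ) => ?_
          rw [norm_smul, norm_of_nonneg (by positivity)]
          calc _ ≤ (√μ)⁻¹ * (2 * K * (1 + c + μ)⁻¹) := by
                gcongr; exact norm_mul_commutator_sqResolvent_le ha hc hμ.le hspec hK
            _ = _ := by ring
      _ = π * (2 * K / √(1 + c)) := by
          rw [integral_const_mul, integral_Ioi_inv_sqrt_mul_inv_add (by positivity)]; ring
  exact le_of_mul_le_mul_left hnorm pi_pos

theorem norm_commutator_cfc_boundedTransform_le [PartialOrder A] [StarOrderedRing A]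
    (ha : IsSelfAdjoint a) (hc : 0 ≤ c) (hsq : algebraMap ℝ A c ≤ a ^ 2) {f : A} {K : ℝ}
    (hK : ‖a * f - f * a‖ ≤ K) :
    ‖f * cfc (fun x : ℝ => x * (√(1 + x ^ 2))⁻¹) a -
        cfc (fun x : ℝ => x * (√(1 + x ^ 2))⁻¹) a * f‖ ≤ 3 * K / √(1 + c) := by
  have hspec := ha.le_sq_of_mem_spectrum hsq
  have hB : cfc (fun x : ℝ => x * (√(1 + x ^ 2))⁻¹) a = a * invSqrtOneAddSq a := by
    rw [cfc_mul (fun x : ℝ => x) _ a (by fun_prop)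
      continuous_inv_sqrt_one_add_sq.continuousOn, cfc_id' ℝ a, invSqrtOneAddSq]
  have hsplit : f * (a * invSqrtOneAddSq a) - a * invSqrtOneAddSq a * f =
      -((a * f - f * a) * invSqrtOneAddSq a) +
        a * (f * invSqrtOneAddSq a - invSqrtOneAddSq a * f) := by
    noncomm_ring
  rw [hB, hsplit]
  calc _ ≤ ‖a * f - f * a‖ * ‖invSqrtOneAddSq a‖ +
        ‖a * (f * invSqrtOneAddSq a - invSqrtOneAddSq a * f)‖ := by
        refine (norm_add_le _ _).trans ?_
        rw [norm_neg]
        gcongr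
        exact norm_mul_le _ _
    _ ≤ K * (√(1 + c))⁻¹ + 2 * K / √(1 + c) := by
        gcongr
        · exact (norm_nonneg _).trans hK
        · exact norm_invSqrtOneAddSq_le hc hspec
        · exact norm_mul_commutator_invSqrtOneAddSq_le ha hc hspec hK
    _ = 3 * K / √(1 + c) := by ring

end CStarAlgebra

lemma ContinuousLinearMap.algebraMap_le_sq_of_le_re_inner {H : Type*} [NormedAddCommGroup H]
    [InnerProductSpace ℂ H] [CompleteSpace H] {D : H →L[ℂ] H} (hD : IsSelfAdjoint D) {c : ℝ}
    (hbound : ∀ ω : H, c * ‖ω‖ ^ 2 ≤ (⟪D (D ω), ω⟫_ℂ).re) :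
    algebraMap ℝ (H →L[ℂ] H) c ≤ D ^ 2 := by
  rw [ContinuousLinearMap.le_def, ContinuousLinearMap.isPositive_def']
  refine ⟨(hD.pow 2).sub (.algebraMap _ (.all c)), fun ω => ?_⟩
  have h : (⟪c • ω, ω⟫_ℂ).re = c * ‖ω‖ ^ 2 := by
    rw [RCLike.real_smul_eq_coe_smul (K := ℂ), inner_smul_real_left]
    simp [inner_self_eq_norm_sq_to_K, ← Complex.ofReal_pow]
  simpa [ContinuousLinearMap.reApplyInnerSelf_apply, sq, inner_sub_left,
    Algebra.algebraMap_eq_smul_one, h] using hbound ω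

theorem stmt_9_general {H : Type*} [NormedAddCommGroup H] [InnerProductSpace ℂ H] [CompleteSpace H]
    (D f : H →L[ℂ] H) (hD : IsSelfAdjoint D)
    (K : ℝ) (hK : ‖D * f - f * D‖ ≤ K) (c : ℝ) (hc : 0 < c)
    (hbound : ∀ ω : H, c * ‖ω‖ ^ 2 ≤ (⟪D (D ω), ω⟫_ℂ).re) :
    ‖f * boundedTransform D - boundedTransform D * f‖ ≤ 3 * K / Real.sqrt (1 + c) :=
  norm_commutator_cfc_boundedTransform_le hD hc.le
    (ContinuousLinearMap.algebraMap_le_sq_of_le_re_inner hD hbound) hK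

/-- If `D`, `f` are bounded self-adjoint with `‖[D,f]‖ ≤ K` and `D² ≥ c·1`, `c > 0`, then the
commutator of `f` with the bounded transform of `D` satisfies
`‖[f, D(1+D²)^{-1/2}]‖ ≤ 3K/√(1+c)`. -/
theorem stmt_9 {H : Type*} [NormedAddCommGroup H] [InnerProductSpace ℂ H] [CompleteSpace H]
    (D f : H →L[ℂ] H) (hD : IsSelfAdjoint D) (hf : IsSelfAdjoint f)
    (K : ℝ) (hK : ‖D * f - f * D‖ ≤ K) (c : ℝ) (hc : 0 < c)
    (hbound : ∀ ω : H, c * ‖ω‖ ^ 2 ≤ (⟪D (D ω), ω⟫_ℂ).re) :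
    ‖f * boundedTransform D - boundedTransform D * f‖ ≤ 3 * K / Real.sqrt (1 + c) :=
  stmt_9_general D f hD K hK c hc hbound
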